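/- Let (G,I,O) be an open graph with I∩O = ∅ and let M'_{G,I,O} be the variable flow matrix: starting from the reduced adjacency matrix over F₂, for each internal vertex v ∈ B = V∖(I∪O) multiply row v by a variable x_v and column v by a variable y_v, and set the (v,v) entry to (1+x_v)(1+y_v). Then there exists a measurement labelling λ such that (G,I,O,λ) has a Pauli flow if and only if there exists a valuation of all the variables x_v, y_v in {0,1} under which M'_{G,I,O} is right-invertible over F₂. -/

import Mathlib

inductive MLabel | X | Y | Z | XY | XZ | YZ
deriving DecidableEq

open Finset

variable {V : Type} [Fintype V] [DecidableEq V]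

/-- The odd neighbourhood of a set of vertices. -/
def Odds (G : SimpleGraph V) [DecidableRel G.Adj] (A : Finset V) : Finset V :=
  Finset.univ.filter fun v => Odd (A ∩ G.neighborFinset v).card

/-- Pauli flow conditions (P1)-(P9) for a labelled open graph. -/
structure PauliFlow (G : SimpleGraph V) [DecidableRel G.Adj]
    (I O : Finset V) (lam : V → MLabel) (c : V → Finset V) (prec : V → V → Prop) : Prop where
  irrefl : ∀ u, ¬ prec u u
  trans : ∀ u v w, prec u v → prec v w → prec u w
  csub : ∀ u, u ∉ O → ∀ v ∈ c u, v ∉ I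
  P1 : ∀ u, u ∉ O → ∀ v ∈ c u, v ∉ O → u ≠ v →
      lam v ≠ MLabel.X → lam v ≠ MLabel.Y → prec u v
  P2 : ∀ u, u ∉ O → ∀ v ∈ Odds G (c u), v ∉ O → u ≠ v →
      lam v ≠ MLabel.Y → lam v ≠ MLabel.Z → prec u v
  P3 : ∀ u, u ∉ O → ∀ v, v ∉ O → ¬ prec u v → u ≠ v → lam v = MLabel.Y →
      (v ∈ c u ↔ v ∈ Odds G (c u))
  P4 : ∀ u, u ∉ O → lam u = MLabel.XY → u ∉ c u ∧ u ∈ Odds G (c u)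
  P5 : ∀ u, u ∉ O → lam u = MLabel.XZ → u ∈ c u ∧ u ∈ Odds G (c u)
  P6 : ∀ u, u ∉ O → lam u = MLabel.YZ → u ∈ c u ∧ u ∉ Odds G (c u)
  P7 : ∀ u, u ∉ O → lam u = MLabel.X → u ∈ Odds G (c u)
  P8 : ∀ u, u ∉ O → lam u = MLabel.Z → u ∈ c u
  P9 : ∀ u, u ∉ O → lam u = MLabel.Y → Xor' (u ∈ c u) (u ∈ Odds G (c u))

/-- Focussing conditions (F1)-(F3). -/
def Focussed (G : SimpleGraph V) [DecidableRel G.Adj]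
    (O : Finset V) (lam : V → MLabel) (c : V → Finset V) : Prop :=
  ∀ v, v ∉ O →
    (∀ w, w ∉ O → w ≠ v → w ∈ c v →
      lam w = MLabel.XY ∨ lam w = MLabel.X ∨ lam w = MLabel.Y) ∧
    (∀ w, w ∉ O → w ≠ v → w ∈ Odds G (c v) →
      lam w = MLabel.XZ ∨ lam w = MLabel.YZ ∨ lam w = MLabel.Y ∨ lam w = MLabel.Z) ∧
    (∀ w, w ∉ O → w ≠ v → lam w = MLabel.Y → (w ∈ c v ↔ w ∈ Odds G (c v)))

/-- The reduced adjacency matrix over F₂: rows indexed by non-outputs, columns by non-inputs. -/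
def redAdj (G : SimpleGraph V) [DecidableRel G.Adj] (I O : Finset V) :
    Matrix {v : V // v ∉ O} {v : V // v ∉ I} (ZMod 2) :=
  Matrix.of fun v u => if G.Adj v.val u.val then 1 else 0

/-- The variable flow matrix, evaluated at a {0,1}-valuation `x`, `y` of the row
and column variables of internal vertices: row `v` is multiplied by `x v` and
column `v` by `y v` for internal `v`, and the `(v,v)` entry is set to
`(1 + x v)(1 + y v)`. -/
def varFlowMat (G : SimpleGraph V) [DecidableRel G.Adj] (I O : Finset V)
    (x y : V → ZMod 2) : Matrix {v : V // v ∉ O} {v : V // v ∉ I} (ZMod 2) :=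
  Matrix.of fun v u =>
    if v.val = u.val then
      (if v.val ∉ I ∧ v.val ∉ O then (1 + x v.val) * (1 + y v.val) else 0)
    else
      (if G.Adj v.val u.val then 1 else 0) *
      (if v.val ∉ I ∧ v.val ∉ O then x v.val else 1) *
      (if u.val ∉ I ∧ u.val ∉ O then y u.val else 1)

/-!
Both sides amount to right-invertibility of a flow-demand matrix `D` for a labelling by `X` and
`Z` only: the row of `D` at a vertex measured in `X` (resp. `Z`, `Y`) is its adjacency row (resp.
its unit row, the sum of both). The correction sets of a Pauli flow form a matrix `C` such that
`D * C` is unitriangular for the flow order, so the rows of `D` are independent; since a `Y` row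
is the sum of the `X` and `Z` rows of the same vertex, one of those keeps the rows independent.
Conversely, the columns of a right inverse of `D` are the correction sets of a Pauli flow with
empty order. Finally, for the labelling encoded by `x`, `varFlowMat x x` is `D` up to an
invertible row operation, and `varFlowMat x y` is `varFlowMat x x` times a diagonal matrix unless
it has a zero row.
-/

open Finset Matrix

section General

variable {K m n M ι α : Type*}

theorem Fintype.sum_subtype_eq_sum [Fintype α] [AddCommMonoid M] {P : α → Prop}
    [DecidablePred P] (f : α → M) (hf : ∀ a, ¬ P a → f a = 0) :
    ∑ a : {a // P a}, f a = ∑ a, f a := by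
  rw [← Fintype.sum_subtype_add_sum_subtype P f,
    Fintype.sum_eq_zero (fun a : {a // ¬ P a} => f a) fun a => hf a a.2, add_zero]

theorem Matrix.row_ne_zero_of_mul_eq_one [Semiring K] [Nontrivial K] [Fintype n] [DecidableEq m]
    {A : Matrix m n K} {B : Matrix n m K} (h : A * B = 1) (i : m) : A i ≠ 0 := by
  intro hi
  simpa [mul_apply, hi] using congrFun (congrFun h i) i

theorem Matrix.exists_mul_eq_one_of_linearIndependent_row [Field K] [Fintype m] [DecidableEq m]
    [Fintype n] {A : Matrix m n K} (h : LinearIndependent K A.row) :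
    ∃ B : Matrix n m K, A * B = 1 := by
  rw [← mulVec_surjective_iff_exists_right_inverse, ← coe_mulVecLin, ← LinearMap.range_eq_top]
  apply Submodule.eq_top_of_finrank_eq
  rw [← Matrix.rank, h.rank_matrix, Module.finrank_fintype_fun_eq_card]

theorem Matrix.exists_mul_mul_eq_one_iff [Semiring K] [Fintype m] [DecidableEq m] [Fintype n]
    {R : Matrix m m K} (hR : IsUnit R) {A : Matrix m n K} :
    (∃ B : Matrix n m K, R * A * B = 1) ↔ ∃ B : Matrix n m K, A * B = 1 := by
  obtain ⟨L, hL⟩ := hR.exists_left_inv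
  obtain ⟨R', hR'⟩ := hR.exists_right_inv
  constructor
  · rintro ⟨B, hB⟩
    refine ⟨B * R, ?_⟩
    calc A * (B * R)
        _ = L * (R * A * B) * R := by simp only [← Matrix.mul_assoc, hL, Matrix.one_mul]
        _ = 1 := by rw [hB, Matrix.mul_one, hL]
  · rintro ⟨B, hB⟩
    refine ⟨B * R', ?_⟩
    rw [Matrix.mul_assoc, ← Matrix.mul_assoc A, hB, Matrix.one_mul, hR']

theorem LinearIndependent.or_of_eq_add [DivisionRing K] [AddCommGroup M] [Module K M]
    {f g h : ι → M} {k : ι} (hf : LinearIndependent K f) (hg : ∀ i ≠ k, g i = f i)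
    (hh : ∀ i ≠ k, h i = f i) (hk : f k = g k + h k) :
    LinearIndependent K g ∨ LinearIndependent K h := by
  have key : ∀ e : ι → M, (∀ i ≠ k, e i = f i) →
      (LinearIndependent K e ↔
        LinearIndepOn K f {k}ᶜ ∧ e k ∉ Submodule.span K (f '' {k}ᶜ)) := by
    intro e he
    have heq : Set.EqOn e f {k}ᶜ := fun i hi => he i hi
    have huniv : insert k ({k}ᶜ : Set ι) = Set.univ := by ext; simp [em]
    rw [← linearIndepOn_univ_iff, ← huniv,
      linearIndepOn_insert (by simp : k ∉ ({k}ᶜ : Set ι)), linearIndepOn_congr heq,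
      heq.image_eq]
  rw [key f fun _ _ => rfl] at hf
  rw [key g hg, key h hh]
  by_contra! hgh
  exact hf.2 (hk ▸ Submodule.add_mem _ (hgh.1 hf.1) (hgh.2 hf.1))

theorem Matrix.eq_zero_of_vecMul_eq_zero_of_wellFounded [Semiring K] [Fintype ι]
    {A : Matrix ι ι K} {r : ι → ι → Prop} (hr : WellFounded r) (hdiag : ∀ i, A i i = 1)
    (hoff : ∀ i j, i ≠ j → A i j ≠ 0 → r i j) {g : ι → K} (hg : g ᵥ* A = 0) :
    g = 0 := by
  by_contra hne
  obtain ⟨j, hj, hmin⟩ := hr.has_min {i | g i ≠ 0} (Function.ne_iff.mp hne)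
  have hsum : (g ᵥ* A) j = g j := by
    rw [vecMul, dotProduct, Fintype.sum_eq_single j, hdiag, mul_one]
    intro i hij
    by_contra hgi
    exact hmin i (left_ne_zero_of_mul hgi) (hoff i j hij (right_ne_zero_of_mul hgi))
  exact hj (hsum ▸ congrFun hg j)

end General

namespace MLabel

/-- A label's coefficients of the adjacency row and of the unit row in the flow-demand matrix:
`X` and `XY` measurements constrain the odd neighbourhood of a correction set, `Z`, `XZ` and `YZ`
measurements constrain the set itself, and `Y` measurements the sum of both. -/
def xPart : MLabel → ZMod 2
  | X | XY | Y => 1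
  | _ => 0

def zPart : MLabel → ZMod 2
  | Z | XZ | YZ | Y => 1
  | _ => 0

def ofBit (t : ZMod 2) : MLabel := if t = 1 then X else Z

theorem xPart_ofBit (t : ZMod 2) : (ofBit t).xPart = t := by
  revert t
  decide

theorem zPart_ofBit (t : ZMod 2) : (ofBit t).zPart = 1 + t := by
  revert t
  decide

theorem ofBit_cases (t : ZMod 2) : ofBit t = X ∨ ofBit t = Y ∨ ofBit t = Z := by
  unfold ofBit
  split_ifs <;> simp

theorem xPart_comp_ofBit {α : Type*} (t : α → ZMod 2) : xPart ∘ ofBit ∘ t = t :=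
  funext fun v => xPart_ofBit (t v)

theorem zPart_comp_ofBit {α : Type*} (t : α → ZMod 2) : zPart ∘ ofBit ∘ t = 1 + t :=
  funext fun v => zPart_ofBit (t v)

def demand (G : SimpleGraph V) [DecidableRel G.Adj] (l : MLabel) (S : Finset V) (w : V) :
    ZMod 2 :=
  l.xPart * (if w ∈ Odds G S then 1 else 0) + l.zPart * (if w ∈ S then 1 else 0)

section Demand

variable (G : SimpleGraph V) [DecidableRel G.Adj] (S : Finset V) (w : V)

@[simp]
theorem demand_X : X.demand G S w = if w ∈ Odds G S then 1 else 0 := by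
  simp [demand, xPart, zPart]

@[simp]
theorem demand_Y :
    Y.demand G S w = (if w ∈ Odds G S then 1 else 0) + if w ∈ S then 1 else 0 := by
  simp [demand, xPart, zPart]

@[simp]
theorem demand_Z : Z.demand G S w = if w ∈ S then 1 else 0 := by
  simp [demand, xPart, zPart]

end Demand

end MLabel

section FlowDemand

variable {G : SimpleGraph V} [DecidableRel G.Adj] {I O : Finset V}

/-- For a labelling `lam`, `flowDemandMat G I O (MLabel.xPart ∘ lam) (MLabel.zPart ∘ lam)` is
the flow-demand matrix of `(G, I, O, lam)`. -/
def flowDemandMat (G : SimpleGraph V) [DecidableRel G.Adj] (I O : Finset V) (p q : V → ZMod 2) :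
    Matrix {v : V // v ∉ O} {v : V // v ∉ I} (ZMod 2) :=
  Matrix.of fun w a => p w * redAdj G I O w a + q w * if w.val = a.val then 1 else 0

def corrMat (I O : Finset V) (c : V → Finset V) :
    Matrix {v : V // v ∉ I} {v : V // v ∉ O} (ZMod 2) :=
  Matrix.of fun a u => if a.val ∈ c u.val then 1 else 0

omit [Fintype V] in
theorem flowDemandMat_congr {p q p' q' : V → ZMod 2} (hp : ∀ v, v ∉ O → p v = p' v)
    (hq : ∀ v, v ∉ O → q v = q' v) : flowDemandMat G I O p q = flowDemandMat G I O p' q' := by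
  ext w a
  simp only [flowDemandMat, of_apply, hp w w.2, hq w w.2]

theorem exists_eq_corrMat (N : Matrix {v : V // v ∉ I} {v : V // v ∉ O} (ZMod 2)) :
    ∃ c : V → Finset V, (∀ u, u ∉ O → ∀ a ∈ c u, a ∉ I) ∧ N = corrMat I O c := by
  refine ⟨fun u => if hu : u ∈ O then ∅ else
    (univ.filter fun a => N a ⟨u, hu⟩ = 1).map (Function.Embedding.subtype _), ?_, ?_⟩
  · intro u hu a ha
    simp only [dif_neg hu, mem_map, mem_filter, Function.Embedding.coe_subtype] at ha
    obtain ⟨a, -, rfl⟩ := ha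
    exact a.2
  · ext a u
    have hN : ∀ t : ZMod 2, t = if t = 1 then 1 else 0 := by decide
    simp only [corrMat, of_apply, dif_neg u.2, mem_map, mem_filter, mem_univ, true_and,
      Function.Embedding.coe_subtype, Subtype.val_inj, exists_eq_right]
    exact hN _

theorem flowDemandMat_mul_corrMat_apply {lam : V → MLabel} {c : V → Finset V}
    (hc : ∀ u, u ∉ O → ∀ a ∈ c u, a ∉ I) (w u : {v : V // v ∉ O}) :
    (flowDemandMat G I O (MLabel.xPart ∘ lam) (MLabel.zPart ∘ lam) * corrMat I O c) w u =
      (lam w).demand G (c u) w := by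
  have hodd : ((c u ∩ G.neighborFinset w).card : ZMod 2) =
      if w.val ∈ Odds G (c u) then 1 else 0 := by
    simp only [Odds, mem_filter, mem_univ, true_and]
    split_ifs with h
    · exact ZMod.natCast_eq_one_iff_odd.mpr h
    · exact ZMod.natCast_eq_zero_iff_even.mpr (Nat.not_odd_iff_even.mp h)
  simp only [mul_apply, flowDemandMat, corrMat, redAdj, of_apply, Function.comp_apply]
  rw [Fintype.sum_subtype_eq_sum (fun a => ((lam w).xPart * (if G.Adj w a then 1 else 0) +
      (lam w).zPart * if w.val = a then 1 else 0) * if a ∈ c u then 1 else 0)]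
  · have hnbr : (univ.filter fun a => G.Adj w a ∧ a ∈ c u) = c u ∩ G.neighborFinset w := by
      ext a
      simp [and_comm]
    simp only [add_mul, mul_assoc, sum_add_distrib, ← mul_sum, boole_mul, sum_ite_eq, mem_univ,
      if_true]
    simp only [← ite_and, sum_boole, hnbr, hodd, MLabel.demand]
  · intro a ha
    have : a ∉ c u := fun h => hc u u.2 a h (not_not.mp ha)
    simp [this]

namespace PauliFlow

variable {lam : V → MLabel} {c : V → Finset V} {prec : V → V → Prop}

theorem demand_self (hf : PauliFlow G I O lam c prec) {u : V} (hu : u ∉ O) :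
    (lam u).demand G (c u) u = 1 := by
  cases hl : lam u <;> simp only [MLabel.demand, MLabel.xPart, MLabel.zPart]
  · simp [hf.P7 u hu hl]
  · rcases hf.P9 u hu hl with ⟨h1, h2⟩ | ⟨h1, h2⟩ <;> simp [h1, h2]
  · simp [hf.P8 u hu hl]
  · simp [hf.P4 u hu hl]
  · simp [hf.P5 u hu hl]
  · simp [hf.P6 u hu hl]

theorem prec_of_demand_ne_zero (hf : PauliFlow G I O lam c prec) {u w : V} (hu : u ∉ O)
    (hw : w ∉ O) (huw : u ≠ w) (h : (lam w).demand G (c u) w ≠ 0) : prec u w := by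
  cases hl : lam w <;> simp only [hl, MLabel.demand, MLabel.xPart, MLabel.zPart] at h
  · exact hf.P2 u hu w (by simpa using h) hw huw (by simp [hl]) (by simp [hl])
  · by_contra hp
    simp only [hf.P3 u hu w hw hp huw hl] at h
    revert h
    split_ifs <;> decide
  · exact hf.P1 u hu w (by simpa using h) hw huw (by simp [hl]) (by simp [hl])
  · exact hf.P2 u hu w (by simpa using h) hw huw (by simp [hl]) (by simp [hl])
  · exact hf.P1 u hu w (by simpa using h) hw huw (by simp [hl]) (by simp [hl])
  · exact hf.P1 u hu w (by simpa using h) hw huw (by simp [hl]) (by simp [hl])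

theorem wellFounded_swap (hf : PauliFlow G I O lam c prec) : WellFounded (Function.swap prec) :=
  have : IsTrans V (Function.swap prec) := ⟨fun _ _ _ h₁ h₂ => hf.trans _ _ _ h₂ h₁⟩
  have : Std.Irrefl (Function.swap prec) := ⟨hf.irrefl⟩
  Finite.wellFounded_of_trans_of_irrefl _

theorem linearIndependent_flowDemandMat (hf : PauliFlow G I O lam c prec) :
    LinearIndependent (ZMod 2)
      (flowDemandMat G I O (MLabel.xPart ∘ lam) (MLabel.zPart ∘ lam)).row := by
  set D := flowDemandMat G I O (MLabel.xPart ∘ lam) (MLabel.zPart ∘ lam)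
  rw [← vecMul_injective_iff, ← coe_vecMulLinear, injective_iff_map_eq_zero]
  intro g hg
  refine eq_zero_of_vecMul_eq_zero_of_wellFounded (hf.wellFounded_swap.onFun (f := Subtype.val))
    (A := D * corrMat I O c) (fun u => ?_) (fun w u hwu h => ?_) ?_
  · rw [flowDemandMat_mul_corrMat_apply hf.csub]
    exact hf.demand_self u.2
  · rw [flowDemandMat_mul_corrMat_apply hf.csub] at h
    exact hf.prec_of_demand_ne_zero u.2 w.2 (fun h => hwu (Subtype.ext h.symm)) h
  · rw [← vecMul_vecMul, show g ᵥ* D = 0 from hg, zero_vecMul]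

end PauliFlow

theorem pauliFlow_of_flowDemandMat_mul_eq_one {lam : V → MLabel}
    (hlam : ∀ v, v ∉ O → lam v = .X ∨ lam v = .Y ∨ lam v = .Z)
    {N : Matrix {v : V // v ∉ I} {v : V // v ∉ O} (ZMod 2)}
    (hN : flowDemandMat G I O (MLabel.xPart ∘ lam) (MLabel.zPart ∘ lam) * N = 1) :
    ∃ c, PauliFlow G I O lam c fun _ _ => False := by
  obtain ⟨c, hc, rfl⟩ := exists_eq_corrMat N
  have hdem : ∀ u w, u ∉ O → w ∉ O →
      (lam w).demand G (c u) w = if w = u then 1 else 0 := by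
    intro u w hu hw
    simpa [flowDemandMat_mul_corrMat_apply hc, one_apply] using
      congrFun (congrFun hN ⟨w, hw⟩) ⟨u, hu⟩
  refine ⟨c, fun _ h => h, fun _ _ _ h => h.elim, hc, ?_, ?_, ?_, ?_, ?_, ?_, ?_, ?_, ?_⟩
  · intro u hu v hv hvO huv hX hY
    have := hdem u v hu hvO
    rcases hlam v hvO with hl | hl | hl <;> simp_all
  · intro u hu v hv hvO huv hY hZ
    have := hdem u v hu hvO
    rcases hlam v hvO with hl | hl | hl <;> simp_all
  · intro u hu v hvO _ huv hl
    have := hdem u v hu hvO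
    rw [hl, MLabel.demand_Y, if_neg huv.symm] at this
    revert this
    split_ifs <;> simp_all
  · intro u hu hl
    simpa [hl] using hlam u hu
  · intro u hu hl
    simpa [hl] using hlam u hu
  · intro u hu hl
    simpa [hl] using hlam u hu
  · intro u hu hl
    simpa [hl] using hdem u u hu hu
  · intro u hu hl
    simpa [hl] using hdem u u hu hu
  · intro u hu hl
    have := hdem u u hu hu
    rw [hl, MLabel.demand_Y, if_pos rfl] at this
    show (_ ∧ ¬ _) ∨ (_ ∧ ¬ _)
    revert this
    split_ifs <;> simp_all

omit [Fintype V] in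
theorem linearIndependent_flowDemandMat_update_or {p q : V → ZMod 2} {v : V} (hv : v ∉ O)
    (h : LinearIndependent (ZMod 2) (flowDemandMat G I O p q).row) :
    LinearIndependent (ZMod 2) (flowDemandMat G I O (Function.update p v 0) q).row ∨
      LinearIndependent (ZMod 2) (flowDemandMat G I O p (Function.update q v 0)).row := by
  have hne : ∀ i : {v // v ∉ O}, i ≠ ⟨v, hv⟩ → i.val ≠ v :=
    fun i hi h => hi (Subtype.ext h)
  refine h.or_of_eq_add (k := ⟨v, hv⟩) (fun i hi => ?_) (fun i hi => ?_) ?_ <;> ext a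
  · simp [flowDemandMat, Function.update_of_ne (hne i hi)]
  · simp [flowDemandMat, Function.update_of_ne (hne i hi)]
  · simp [flowDemandMat, add_comm]

theorem exists_linearIndependent_flowDemandMat_one_add {p q : V → ZMod 2}
    (h : LinearIndependent (ZMod 2) (flowDemandMat G I O p q).row) :
    ∃ x, LinearIndependent (ZMod 2) (flowDemandMat G I O x (1 + x)).row := by
  suffices key : ∀ (S : Finset V) (p q : V → ZMod 2),
      (∀ v, v ∉ O → v ∉ S → q v = 1 + p v) →
      LinearIndependent (ZMod 2) (flowDemandMat G I O p q).row →
      ∃ x, LinearIndependent (ZMod 2) (flowDemandMat G I O x (1 + x)).row from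
    key univ p q (fun v _ hv => absurd (mem_univ v) hv) h
  intro S
  induction S using Finset.induction_on with
  | empty =>
    intro p q hpq h
    refine ⟨p, ?_⟩
    convert h using 2
    exact flowDemandMat_congr (fun _ _ => rfl) fun v hv => (hpq v hv (notMem_empty v)).symm
  | insert v S _ ih =>
    intro p q hpq h
    have extend : ∀ p' q' : V → ZMod 2, (v ∉ O → q' v = 1 + p' v) →
        (∀ w ≠ v, p' w = p w) → (∀ w ≠ v, q' w = q w) →
        ∀ w, w ∉ O → w ∉ S → q' w = 1 + p' w := by
      intro p' q' hv hp' hq' w hw hwS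
      rcases eq_or_ne w v with rfl | hwv
      · exact hv hw
      · rw [hp' w hwv, hq' w hwv]
        exact hpq w hw (by simp [hwv, hwS])
    by_cases hY : v ∉ O ∧ q v ≠ 1 + p v
    · obtain ⟨hvO, hqp⟩ := hY
      have hpv : p v = 1 ∧ q v = 1 := by
        have hrow := h.ne_zero ⟨v, hvO⟩
        contrapose! hrow
        have hzero : p v = 0 ∧ q v = 0 := by
          generalize p v = s, q v = t at hqp hrow
          revert s t
          decide
        ext a
        simp [flowDemandMat, hzero]
      rcases linearIndependent_flowDemandMat_update_or hvO h with h' | h'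
      · refine ih _ _ (extend _ _ (fun _ => ?_) (fun _ hw => Function.update_of_ne hw _ _)
          fun _ _ => rfl) h'
        simp [hpv.2]
      · refine ih _ _ (extend _ _ (fun _ => ?_) (fun _ _ => rfl)
          fun _ hw => Function.update_of_ne hw _ _) h'
        simp only [Function.update_self, hpv.1]
        decide
    · refine ih p q (extend p q (fun hvO => ?_) (fun _ _ => rfl) fun _ _ => rfl) h
      by_contra hqp
      exact hY ⟨hvO, hqp⟩

def oneOutside (I O : Finset V) (x : V → ZMod 2) (v : V) : ZMod 2 :=
  if v ∉ I ∧ v ∉ O then x v else 1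

omit [Fintype V] in
theorem varFlowMat_apply (x y : V → ZMod 2) (w : {v : V // v ∉ O}) (a : {v : V // v ∉ I}) :
    varFlowMat G I O x y w a = redAdj G I O w a * oneOutside I O x w * oneOutside I O y a +
      if w.val = a.val then (1 + oneOutside I O x w) * (1 + oneOutside I O y a) else 0 := by
  by_cases hwa : w.val = a.val
  · have hint : a.val ∉ I ∧ a.val ∉ O := ⟨a.2, hwa ▸ w.2⟩
    simp [varFlowMat, redAdj, oneOutside, hwa, hint]
  · simp [varFlowMat, redAdj, oneOutside, hwa]

/-- Left multiplication by this matrix adds to each row `w` with `t w = 1` the rows of the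
neighbours `b` of `w` with `t b = 0`. -/
def addAdjZRows (G : SimpleGraph V) [DecidableRel G.Adj] (O : Finset V) (t : V → ZMod 2) :
    Matrix {v : V // v ∉ O} {v : V // v ∉ O} (ZMod 2) :=
  1 + Matrix.of fun w b : {v : V // v ∉ O} =>
    t w * (if G.Adj w.val b.val then 1 else 0) * (1 + t b)

theorem addAdjZRows_mul_self (t : V → ZMod 2) : addAdjZRows G O t * addAdjZRows G O t = 1 := by
  set K : Matrix {v : V // v ∉ O} {v : V // v ∉ O} (ZMod 2) :=
    Matrix.of fun w b => t w * (if G.Adj w.val b.val then 1 else 0) * (1 + t b)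
  have hKK : K * K = 0 := by
    ext w c
    refine sum_eq_zero fun b _ => ?_
    have : ∀ r s u v e : ZMod 2, r * s * (1 + e) * (e * u * v) = 0 := by decide
    exact this ..
  have hK2 : K + K = 0 := by
    ext w b
    exact CharTwo.add_self_eq_zero _
  change (1 + K) * (1 + K) = 1
  simp only [Matrix.add_mul, Matrix.mul_add, Matrix.one_mul, Matrix.mul_one, hKK, add_zero,
    add_assoc, hK2]

theorem varFlowMat_self_eq (x : V → ZMod 2) :
    varFlowMat G I O x x = addAdjZRows G O (oneOutside I O x) *
      flowDemandMat G I O (oneOutside I O x) (1 + oneOutside I O x) := by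
  ext w a
  rw [addAdjZRows, Matrix.add_mul, Matrix.one_mul, Matrix.add_apply, mul_apply, varFlowMat_apply]
  simp only [flowDemandMat, redAdj, of_apply, Pi.add_apply, Pi.one_apply]
  set t := oneOutside I O x
  have h2 : (1 + 1 : ZMod 2) = 0 := by decide
  have ht : ∀ v ∈ O, t v = 1 := fun v hv => if_neg fun h => h.2 hv
  rw [Fintype.sum_subtype_eq_sum (fun b => t w * (if G.Adj w b then 1 else 0) * (1 + t b) *
      (t b * (if G.Adj b a then 1 else 0) + (1 + t b) * if b = a.val then 1 else 0))]
  · rw [Fintype.sum_eq_single a.val fun b hb => ?_]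
    · by_cases hwa : w.val = a.val
      · simp only [hwa, SimpleGraph.irrefl, if_false, if_true]
        generalize t a = s
        revert s
        decide
      · simp only [hwa, if_false, if_true]
        generalize t w = s
        generalize t a = s'
        split_ifs <;> revert s s' <;> decide
    · have : ∀ r e u d : ZMod 2, r * u * (1 + e) * (e * d + (1 + e) * 0) = 0 := by decide
      rw [if_neg hb]
      exact this ..
  · intro b hb
    simp [ht b (not_not.mp hb), h2]

theorem varFlowMat_eq_mul_diagonal {x y : V → ZMod 2}
    (hxy : ∀ v, v ∉ I → v ∉ O → x v = 0 → y v = 0) :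
    varFlowMat G I O x y = varFlowMat G I O x x *
      diagonal fun a : {v : V // v ∉ I} => 1 + oneOutside I O x a * (1 + oneOutside I O y a) := by
  ext w a
  have ha : oneOutside I O x a = 0 → oneOutside I O y a = 0 := by
    unfold oneOutside
    split_ifs with hint
    · exact hxy a a.2 hint.2
    · simp
  rw [mul_diagonal, varFlowMat_apply, varFlowMat_apply]
  by_cases hwa : w.val = a.val
  · simp only [hwa, redAdj, of_apply, SimpleGraph.irrefl, if_false, if_true] at ha ⊢
    generalize oneOutside I O x a = s at ha ⊢
    generalize oneOutside I O y a = s' at ha ⊢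
    revert s s'
    decide
  · simp only [hwa, if_false]
    generalize oneOutside I O x a = s at ha ⊢
    generalize oneOutside I O y a = s' at ha ⊢
    generalize redAdj G I O w a * oneOutside I O x w = r
    revert r s s'
    decide

theorem exists_varFlowMat_self_mul_eq_one {x y : V → ZMod 2}
    {N : Matrix {v : V // v ∉ I} {v : V // v ∉ O} (ZMod 2)}
    (hN : varFlowMat G I O x y * N = 1) :
    ∃ N' : Matrix {v : V // v ∉ I} {v : V // v ∉ O} (ZMod 2),
      varFlowMat G I O x x * N' = 1 := by
  have hxy : ∀ v, v ∉ I → v ∉ O → x v = 0 → y v = 0 := by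
    intro v hvI hvO hx
    by_contra hy
    apply row_ne_zero_of_mul_eq_one hN ⟨v, hvO⟩
    have hy : y v = 1 := by revert hy; generalize y v = s; revert s; decide
    ext a
    rw [varFlowMat_apply]
    by_cases hva : v = a.val
    · subst hva
      have h2 : (1 + 1 : ZMod 2) = 0 := by decide
      simp [oneOutside, hvI, hvO, hx, hy, h2]
    · simp [oneOutside, hvI, hvO, hx, hva]
  rw [varFlowMat_eq_mul_diagonal hxy, Matrix.mul_assoc] at hN
  exact ⟨_, hN⟩

theorem exists_varFlowMat_self_mul_eq_one_iff (x : V → ZMod 2) :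
    (∃ N : Matrix {v : V // v ∉ I} {v : V // v ∉ O} (ZMod 2),
        varFlowMat G I O x x * N = 1) ↔
      ∃ N : Matrix {v : V // v ∉ I} {v : V // v ∉ O} (ZMod 2),
        flowDemandMat G I O (oneOutside I O x) (1 + oneOutside I O x) * N = 1 := by
  rw [varFlowMat_self_eq]
  exact exists_mul_mul_eq_one_iff
    ⟨⟨_, _, addAdjZRows_mul_self _, addAdjZRows_mul_self _⟩, rfl⟩

theorem flowDemandMat_oneOutside_of_mul_eq_one {x : V → ZMod 2}
    {N : Matrix {v : V // v ∉ I} {v : V // v ∉ O} (ZMod 2)}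
    (hN : flowDemandMat G I O x (1 + x) * N = 1) :
    flowDemandMat G I O (oneOutside I O x) (1 + oneOutside I O x) =
      flowDemandMat G I O x (1 + x) := by
  have hx : ∀ v, v ∉ O → oneOutside I O x v = x v := by
    intro v hvO
    by_cases hvI : v ∈ I
    · by_contra hx
      apply row_ne_zero_of_mul_eq_one hN ⟨v, hvO⟩
      have hx : x v = 0 := by
        simp only [oneOutside, hvI, not_true_eq_false, false_and, if_false] at hx
        revert hx; generalize x v = s; revert s; decide
      ext a
      have hva : v ≠ a.val := fun h => a.2 (h ▸ hvI)
      simp [flowDemandMat, hx, hva]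
    · simp [oneOutside, hvI, hvO]
  exact flowDemandMat_congr hx fun v hv => by simp [hx v hv]

end FlowDemand

theorem flowSearch_iff_maxRank_general (G : SimpleGraph V) [DecidableRel G.Adj]
    (I O : Finset V) :
    (∃ lam : V → MLabel,
      (∀ v ∈ I, lam v = MLabel.X ∨ lam v = MLabel.XY ∨ lam v = MLabel.Y) ∧
      ∃ (c : V → Finset V) (prec : V → V → Prop), PauliFlow G I O lam c prec) ↔
    (∃ x y : V → ZMod 2,
      ∃ N : Matrix {v : V // v ∉ I} {v : V // v ∉ O} (ZMod 2),
        varFlowMat G I O x y * N = 1) := by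
  constructor
  · rintro ⟨lam, -, c, prec, hflow⟩
    obtain ⟨x, hx⟩ :=
      exists_linearIndependent_flowDemandMat_one_add hflow.linearIndependent_flowDemandMat
    obtain ⟨N, hN⟩ := exists_mul_eq_one_of_linearIndependent_row hx
    refine ⟨x, x, (exists_varFlowMat_self_mul_eq_one_iff x).mpr ⟨N, ?_⟩⟩
    rwa [flowDemandMat_oneOutside_of_mul_eq_one hN]
  · rintro ⟨x, y, N, hN⟩
    obtain ⟨N', hN'⟩ :=
      (exists_varFlowMat_self_mul_eq_one_iff x).mp (exists_varFlowMat_self_mul_eq_one hN)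
    set t := oneOutside I O x
    have hlabels : flowDemandMat G I O (MLabel.xPart ∘ MLabel.ofBit ∘ t)
        (MLabel.zPart ∘ MLabel.ofBit ∘ t) = flowDemandMat G I O t (1 + t) := by
      rw [MLabel.xPart_comp_ofBit, MLabel.zPart_comp_ofBit]
    rw [← hlabels] at hN'
    obtain ⟨c, hc⟩ :=
      pauliFlow_of_flowDemandMat_mul_eq_one (fun v _ => MLabel.ofBit_cases _) hN'
    refine ⟨MLabel.ofBit ∘ t, fun v hv => Or.inl ?_, c, _, hc⟩
    simp [t, oneOutside, hv, MLabel.ofBit]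

/-- An open graph with `I ∩ O = ∅` admits a measurement labelling with Pauli
flow iff some {0,1}-valuation of the variables makes the variable flow matrix
right-invertible over F₂. -/
theorem flowSearch_iff_maxRank (G : SimpleGraph V) [DecidableRel G.Adj]
    (I O : Finset V) (hIO : I ∩ O = ∅) :
    (∃ lam : V → MLabel,
      (∀ v ∈ I, lam v = MLabel.X ∨ lam v = MLabel.XY ∨ lam v = MLabel.Y) ∧
      ∃ (c : V → Finset V) (prec : V → V → Prop), PauliFlow G I O lam c prec) ↔
    (∃ x y : V → ZMod 2,
      ∃ N : Matrix {v : V // v ∉ I} {v : V // v ∉ O} (ZMod 2),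
        varFlowMat G I O x y * N = 1) :=
  flowSearch_iff_maxRank_general G I O
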